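/- The generalized continued fraction with b_0 = 0, a_1 = a_2 = 1, a_n = -(n-1)(2n-5) for n ≥ 3, and b_n = -(3n-2) for n ≥ 1 converges, and its value is -π/4. -/

import Mathlib

/-- Continuant numerators: `cfA a b 0 = A_{-1} = 1`, `cfA a b (n+1) = A_n`. -/
def cfA (a b : ℕ → ℝ) : ℕ → ℝ
  | 0 => 1
  | 1 => b 0
  | n + 2 => b (n + 1) * cfA a b (n + 1) + a (n + 1) * cfA a b n

/-- Continuant denominators: `cfB a b 0 = B_{-1} = 0`, `cfB a b (n+1) = B_n`. -/
def cfB (a b : ℕ → ℝ) : ℕ → ℝ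
  | 0 => 0
  | 1 => 1
  | n + 2 => b (n + 1) * cfB a b (n + 1) + a (n + 1) * cfB a b n

/-- N-th convergent of the generalized continued fraction b_0 + K(a_n/b_n). -/
noncomputable def cfConvergent (a b : ℕ → ℝ) (N : ℕ) : ℝ :=
  cfA a b (N + 1) / cfB a b (N + 1)

/-- Partial numerators of the Ramanujan Machine fraction for -π/4. -/
noncomputable def rmA : ℕ → ℝ := fun n => if n ≤ 2 then 1 else -((n:ℝ) - 1) * (2*(n:ℝ) - 5)

/-- Partial denominators of the Ramanujan Machine fraction for -π/4 (with b_0 = 0). -/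
noncomputable def rmB : ℕ → ℝ := fun n => if n = 0 then 0 else -(3*(n:ℝ) - 2)

/-!
The continuants satisfy `B_{m+1} = (-1)^{m+1} (m² + 3m + 1) (2m - 1)!!` and
`A_{m+1} = (-1)^m (2m - 1)!! ((m² + 3m + 1) S_{m+1} + (m + 1)² e_m) / 2`,
where `e_k = k! / (2k + 1)!!` and `S_n = ∑_{k < n} e_k`; both closed forms satisfy the same second-order recurrence and initial
values as the continuants. So the convergent `A_{m+1} / B_{m+1}` is `-(S_{m+1} + r_m) / 2` with
`0 ≤ r_m ≤ e_m`, and everything reduces to Euler's series `∑ e_k = π / 2`. That follows from Wallis'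
integral `∫₀^π sin^{2k+1} = 2^{k+1} e_k`: summing `sin^{2k+1} x / 2^{k+1}` as a geometric series
under the integral gives `∫₀^π sin x / (1 + cos² x) dx = [-arctan (cos x)]₀^π = π / 2`.
-/

open Real Filter Finset Topology

/-- `k! / (2k + 1)!!`, the terms of Euler's series `∑ k! / (2k + 1)!! = π / 2`. -/
noncomputable def eulerTerm (k : ℕ) : ℝ := ∏ i ∈ range k, (i + 1 : ℝ) / (2 * i + 3)

lemma eulerTerm_nonneg (k : ℕ) : 0 ≤ eulerTerm k :=
  prod_nonneg fun i _ => by positivity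

lemma integral_sin_pow_odd_eq_eulerTerm (k : ℕ) :
    ∫ x in 0..π, sin x ^ (2 * k + 1) = 2 ^ (k + 1) * eulerTerm k := by
  have h : ∀ i : ℕ, (2 * (i : ℝ) + 2) / (2 * i + 3) = 2 * ((i + 1) / (2 * i + 3)) := fun i => by
    ring
  simp only [integral_sin_pow_odd, h, prod_mul_distrib, prod_const, card_range, eulerTerm]
  ring

lemma hasSum_sin_pow_odd_div_two_pow (x : ℝ) :
    HasSum (fun k : ℕ => sin x ^ (2 * k + 1) / 2 ^ (k + 1)) (sin x / (1 + cos x ^ 2)) := by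
  have hr : sin x ^ 2 / 2 < 1 := by nlinarith [sin_sq_le_one x]
  have hterm : (fun k : ℕ => sin x ^ (2 * k + 1) / 2 ^ (k + 1))
      = fun k => sin x / 2 * (sin x ^ 2 / 2) ^ k := funext fun k => by
    rw [div_pow, pow_succ, pow_mul]
    ring
  have hsum : sin x / (1 + cos x ^ 2) = sin x / 2 * (1 - sin x ^ 2 / 2)⁻¹ := by
    rw [cos_sq']
    field_simp
    ring
  rw [hterm, hsum]
  exact (hasSum_geometric_of_lt_one (by positivity) hr).mul_left _

lemma norm_sin_pow_odd_div_two_pow_le (k : ℕ) (x : ℝ) :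
    ‖sin x ^ (2 * k + 1) / 2 ^ (k + 1)‖ ≤ (1 / 2) ^ k := by
  rw [norm_div, norm_pow, norm_pow, Real.norm_eq_abs, Real.norm_two]
  calc |sin x| ^ (2 * k + 1) / 2 ^ (k + 1) ≤ 1 / 2 ^ (k + 1) := by
        gcongr
        exact pow_le_one₀ (abs_nonneg _) (abs_sin_le_one x)
    _ ≤ (1 / 2) ^ k := by
        rw [one_div_pow]
        gcongr <;> norm_num

lemma integral_sin_div_one_add_cos_sq : ∫ x in 0..π, sin x / (1 + cos x ^ 2) = π / 2 := by
  have hderiv : ∀ x ∈ Set.uIcc 0 π,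
      HasDerivAt (fun y => -arctan (cos y)) (sin x / (1 + cos x ^ 2)) x := fun x _ => by
    refine ((hasDerivAt_arctan (cos x)).comp x (hasDerivAt_cos x)).neg.congr_deriv ?_
    ring
  have hcont : Continuous fun x => sin x / (1 + cos x ^ 2) :=
    continuous_sin.div (by fun_prop) fun x => by positivity
  rw [intervalIntegral.integral_eq_sub_of_hasDerivAt hderiv (hcont.intervalIntegrable 0 π)]
  simp only [cos_pi, cos_zero, arctan_neg, arctan_one]
  ring

theorem hasSum_eulerTerm : HasSum eulerTerm (π / 2) := by
  have := intervalIntegral.hasSum_integral_of_dominated_convergence (μ := MeasureTheory.volume)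
    (a := 0) (b := π) (F := fun k x => sin x ^ (2 * k + 1) / 2 ^ (k + 1))
    (f := fun x => sin x / (1 + cos x ^ 2)) (fun k _ => (1 / 2 : ℝ) ^ k)
    (fun k => (by fun_prop : Continuous _).aestronglyMeasurable)
    (fun k => Eventually.of_forall fun x _ => norm_sin_pow_odd_div_two_pow_le k x)
    (Eventually.of_forall fun _ _ => summable_geometric_two)
    intervalIntegrable_const
    (Eventually.of_forall fun x _ => hasSum_sin_pow_odd_div_two_pow x)
  simp only [intervalIntegral.integral_div, integral_sin_pow_odd_eq_eulerTerm,
    integral_sin_div_one_add_cos_sq] at this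
  have hterm : (fun k => 2 ^ (k + 1) * eulerTerm k / 2 ^ (k + 1)) = eulerTerm :=
    funext fun k => mul_div_cancel_left₀ _ (by positivity)
  rwa [hterm] at this

theorem eq_of_two_step_recurrence {α : Type*} (f : ℕ → α → α → α) {u v : ℕ → α}
    (hu : ∀ n, u (n + 2) = f n (u (n + 1)) (u n)) (hv : ∀ n, v (n + 2) = f n (v (n + 1)) (v n))
    (h0 : u 0 = v 0) (h1 : u 1 = v 1) : u = v := by
  funext n
  induction n using Nat.twoStepInduction with
  | zero => exact h0
  | one => exact h1
  | more n ih₀ ih₁ => rw [hu, hv, ih₀, ih₁]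

noncomputable def oddDoubleFactorial (m : ℕ) : ℝ := ∏ i ∈ range m, (2 * i + 1 : ℝ)

lemma rmA_add_three (m : ℕ) : rmA (m + 3) = -((m + 2) * (2 * m + 1)) := by
  rw [rmA, if_neg (by omega)]
  push_cast
  ring

lemma rmB_succ (m : ℕ) : rmB (m + 1) = -(3 * m + 1) := by
  rw [rmB, if_neg (by omega)]
  push_cast
  ring

lemma oddDoubleFactorial_succ (m : ℕ) :
    oddDoubleFactorial (m + 1) = oddDoubleFactorial m * (2 * m + 1) :=
  prod_range_succ _ _

lemma eulerTerm_succ (k : ℕ) : eulerTerm (k + 1) = eulerTerm k * ((k + 1) / (2 * k + 3)) :=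
  prod_range_succ _ _

theorem cfB_rmA_rmB (m : ℕ) :
    cfB rmA rmB (m + 2) = (-1) ^ (m + 1) * (m ^ 2 + 3 * m + 1) * oddDoubleFactorial m := by
  revert m
  refine funext_iff.mp (eq_of_two_step_recurrence (fun n x y => rmB (n + 3) * x + rmA (n + 3) * y)
    (fun _ => rfl) (fun n => ?_) ?_ ?_)
  · simp only [rmA_add_three, rmB_succ, oddDoubleFactorial_succ]
    push_cast
    ring
  · norm_num [cfB, rmA, rmB, oddDoubleFactorial]
  · norm_num [cfB, rmA, rmB, oddDoubleFactorial]

theorem cfA_rmA_rmB (m : ℕ) :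
    cfA rmA rmB (m + 2) = (-1) ^ m * oddDoubleFactorial m *
      ((m ^ 2 + 3 * m + 1) * ∑ k ∈ range (m + 1), eulerTerm k + (m + 1) ^ 2 * eulerTerm m) / 2 := by
  revert m
  refine funext_iff.mp (eq_of_two_step_recurrence (fun n x y => rmB (n + 3) * x + rmA (n + 3) * y)
    (fun _ => rfl) (fun n => ?_) ?_ ?_)
  · simp only [rmA_add_three, rmB_succ, oddDoubleFactorial_succ, sum_range_succ _ (n + 2),
      sum_range_succ _ (n + 1), eulerTerm_succ]
    push_cast
    field_simp
    ring
  · norm_num [cfA, rmA, rmB, oddDoubleFactorial, eulerTerm]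
  · norm_num [cfA, rmA, rmB, oddDoubleFactorial, eulerTerm, sum_range_succ]

theorem cfConvergent_rmA_rmB_succ (m : ℕ) :
    cfConvergent rmA rmB (m + 1) =
      -(∑ k ∈ range (m + 1), eulerTerm k
        + (m + 1) ^ 2 / (m ^ 2 + 3 * m + 1) * eulerTerm m) / 2 := by
  have hq : (m : ℝ) ^ 2 + 3 * m + 1 ≠ 0 := by positivity
  have ho : oddDoubleFactorial m ≠ 0 := prod_ne_zero_iff.mpr fun i _ => by positivity
  rw [cfConvergent, cfA_rmA_rmB, cfB_rmA_rmB, pow_succ]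
  field_simp
  ring

theorem ramanujan_machine_pi_quarter :
    Filter.Tendsto (fun N : ℕ => cfConvergent rmA rmB N) Filter.atTop
      (nhds (-(Real.pi / 4))) := by
  rw [← tendsto_add_atTop_iff_nat 1]
  simp only [cfConvergent_rmA_rmB_succ]
  have hS : Tendsto (fun m => ∑ k ∈ range (m + 1), eulerTerm k) atTop (𝓝 (π / 2)) :=
    hasSum_eulerTerm.tendsto_sum_nat.comp (tendsto_add_atTop_nat 1)
  have hr : Tendsto (fun m : ℕ => (m + 1) ^ 2 / (m ^ 2 + 3 * m + 1) * eulerTerm m) atTop (𝓝 0) :=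
    squeeze_zero (fun m => mul_nonneg (by positivity) (eulerTerm_nonneg m))
      (fun m => mul_le_of_le_one_left (eulerTerm_nonneg m)
        (div_le_one_of_le₀ (by nlinarith) (by positivity)))
      hasSum_eulerTerm.summable.tendsto_atTop_zero
  convert (hS.add hr).neg.div_const 2 using 2
  ring
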